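/- For all real s, t with 0 ≤ s ≤ t, the inclusion e^s · Φ(B²) ⊆ e^t · Φ(B²) holds, where Φ(z₁,z₂) = (z₁ + (3√3/2)z₂², z₂) and e^s · Φ(B²) denotes the set {e^s Φ(z) : z ∈ B²}. -/
import Mathlib


open Complex

noncomputable section

/-- The open unit ball in `ℂ²`. -/
def B2 : Set (ℂ × ℂ) := {z | ‖z.1‖ ^ 2 + ‖z.2‖ ^ 2 < 1}

/-- The map `Φ(z₁,z₂) = (z₁ + (3√3/2) z₂², z₂)`. -/
def Phi (z : ℂ × ℂ) : ℂ × ℂ := (z.1 + ((3 * Real.sqrt 3 / 2 : ℝ) : ℂ) * z.2 ^ 2, z.2)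

/-- Auxiliary polynomial inequality. -/
lemma aux_poly (r β : ℝ) (hr : 0 ≤ r) (hr1 : r ≤ 1) (hb : 0 ≤ β) :
    0 ≤ 4*(1-r)*(1+2*r) + r^2*(3*β-2)^2*(3*β+1) - 27*r^2*(1-r)*β^2 := by
  have key : 4*(1-r)*(1+2*r) + r^2*(3*β-2)^2*(3*β+1) - 27*r^2*(1-r)*β^2
      = 4*(1-r)^2*(1+3*r) - 12*r^2*(1-r)*(3*β-2) + r^2*(3*β-2)^2*((3*β-2)+3*r) := by
    ring
  rw [key]
  rcases le_or_gt 0 (3*β-2) with h | h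
  · have : 4*(1-r)^2*(1+3*r) - 12*r^2*(1-r)*(3*β-2) + r^2*(3*β-2)^2*((3*β-2)+3*r)
        = 4*(1-r)^2 + 3*r*(r*(3*β-2) - 2*(1-r))^2 + r^2*(3*β-2)^3 := by ring
    rw [this]
    have h1 : 0 ≤ 3*r*(r*(3*β-2) - 2*(1-r))^2 := by positivity
    have h2 : 0 ≤ r^2*(3*β-2)^3 := by positivity
    nlinarith [sq_nonneg (1-r)]
  · rcases le_or_gt 0 ((3*β-2)+3*r) with h2 | h2
    · nlinarith [mul_nonneg (mul_nonneg hr hr) (mul_nonneg (sq_nonneg (3*β-2)) h2),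
        mul_nonneg (mul_nonneg (mul_nonneg hr hr) (sub_nonneg.2 hr1)) (le_of_lt (neg_pos.2 h)),
        mul_nonneg (sub_nonneg.2 hr1) (sub_nonneg.2 hr1), sq_nonneg (1-r)]
    · have hu2 : -2 ≤ 3*β-2 := by linarith
      have h4 : (3*β-2)^2 ≤ 4 := by nlinarith
      nlinarith [mul_nonneg (sub_nonneg.2 h4) (le_of_lt (neg_pos.2 h2)),
        mul_nonneg (le_of_lt (neg_pos.2 h)) (by linarith : (0:ℝ) ≤ 2 - 3*r),
        mul_nonneg (mul_nonneg hr hr) (mul_nonneg (le_of_lt (neg_pos.2 h)) (by linarith : (0:ℝ) ≤ 2 - 3*r)),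
        sq_nonneg (1-r), mul_nonneg (mul_nonneg hr hr) hr]

/-- The key real inequality. -/
lemma aux_key (a b r : ℝ) (ha : 0 ≤ a) (hr : 0 < r) (hr1 : r ≤ 1)
    (hab : a^2 + b^2 < 1) :
    (r*a + (3*Real.sqrt 3/2)*(r - r^2)*b^2)^2 + (r*b)^2 < 1 := by
  have h3 : Real.sqrt 3 ^ 2 = 3 := Real.sq_sqrt (by norm_num)
  have hb2 : b^2 ≤ 1 := by nlinarith [sq_nonneg a]
  set A : ℝ := Real.sqrt (1 - b^2) with hA
  have hA0 : 0 ≤ A := Real.sqrt_nonneg _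
  have hA2 : A^2 = 1 - b^2 := Real.sq_sqrt (by linarith)
  have haA : a < A := by
    have : a^2 < A^2 := by rw [hA2]; linarith
    exact lt_of_pow_lt_pow_left₀ 2 hA0 this
  set P : ℝ := 3*Real.sqrt 3 * b^2 * A with hP
  have hP0 : 0 ≤ P := by positivity
  have hPsq : P^2 = 4 - (3*b^2-2)^2*(3*b^2+1) := by
    rw [hP]; linear_combination (9*b^4*A^2) * h3 + (27*b^4) * hA2
  have hP2 : P ≤ 2 := by nlinarith [sq_nonneg (3*b^2-2), sq_nonneg b]
  have hQ : (3*b^2-2)^2*(3*b^2+1) ≤ 4*(2 - P) := by nlinarith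
  have hmain : r^2*P + 27/4*r^2*(1-r)*b^4 ≤ 1 + r := by
    have hp := aux_poly r (b^2) (le_of_lt hr) hr1 (sq_nonneg b)
    nlinarith [mul_nonneg (mul_nonneg (le_of_lt hr) (le_of_lt hr)) (sub_nonneg.2 hP2)]
  have hmul : (1-r)*(r^2*P + 27/4*r^2*(1-r)*b^4) ≤ (1-r)*(1+r) :=
    mul_le_mul_of_nonneg_left hmain (by linarith)
  have hM : (r*A + (3*Real.sqrt 3/2)*(r - r^2)*b^2)^2 + (r*b)^2 ≤ 1 := by
    have e : (r*A + (3*Real.sqrt 3/2)*(r - r^2)*b^2)^2 + (r*b)^2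
        = r^2*(A^2+b^2) + (1-r)*(r^2*P + 27/4*r^2*(1-r)*b^4)
          + ((Real.sqrt 3)^2 - 3)*(9/4*(r-r^2)^2*b^4) := by
      rw [hP]; ring
    rw [e, h3, hA2]
    nlinarith [hmul]
  have hX : 0 ≤ (3*Real.sqrt 3/2)*(r - r^2)*b^2 := by
    have : 0 ≤ r - r^2 := by nlinarith
    positivity
  have hlt : r*a + (3*Real.sqrt 3/2)*(r - r^2)*b^2 < r*A + (3*Real.sqrt 3/2)*(r - r^2)*b^2 := by
    have := mul_lt_mul_of_pos_left haA hr
    linarith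
  have hnn : 0 ≤ r*a + (3*Real.sqrt 3/2)*(r - r^2)*b^2 := by positivity
  have := pow_lt_pow_left₀ hlt hnn two_ne_zero
  linarith

/-- For `0 ≤ s ≤ t`, the inclusion `e^s Φ(B²) ⊆ e^t Φ(B²)` holds. -/
theorem scaled_images_mono (s t : ℝ) (hs : 0 ≤ s) (hst : s ≤ t) :
    (fun z : ℂ × ℂ => Real.exp s • Phi z) '' B2 ⊆
      (fun z : ℂ × ℂ => Real.exp t • Phi z) '' B2 := by
  rintro w ⟨z, hz, rfl⟩
  set r : ℝ := Real.exp (s - t) with hrdef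
  have hr : 0 < r := Real.exp_pos _
  have hr1 : r ≤ 1 := Real.exp_le_one_iff.mpr (by linarith)
  set c : ℝ := 3 * Real.sqrt 3 / 2 with hc
  have hc0 : 0 ≤ c := by positivity
  refine ⟨((r : ℂ) * z.1 + ((c : ℝ) : ℂ) * (((r - r^2 : ℝ)) : ℂ) * z.2 ^ 2, (r : ℂ) * z.2),
    ?_, ?_⟩
  · -- membership in B2
    have hrr : (0:ℝ) ≤ r - r^2 := by nlinarith
    have hb1 : ‖(r:ℂ) * z.1 + ((c : ℝ) : ℂ) * (((r - r^2 : ℝ)) : ℂ) * z.2 ^ 2‖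
        ≤ r * ‖z.1‖ + c * (r - r^2) * ‖z.2‖^2 := by
      calc ‖(r:ℂ) * z.1 + ((c : ℝ) : ℂ) * (((r - r^2 : ℝ)) : ℂ) * z.2 ^ 2‖
          ≤ ‖(r:ℂ) * z.1‖ + ‖((c : ℝ) : ℂ) * (((r - r^2 : ℝ)) : ℂ) * z.2 ^ 2‖ :=
            norm_add_le _ _
        _ = r * ‖z.1‖ + c * (r - r^2) * ‖z.2‖^2 := by
            simp only [norm_mul, norm_pow, Complex.norm_real]
            rw [Real.norm_of_nonneg hr.le, Real.norm_of_nonneg hc0,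
              Real.norm_of_nonneg hrr]
    have hkey := aux_key ‖z.1‖ ‖z.2‖ r (norm_nonneg _) hr hr1 hz
    have h2 : ‖(r:ℂ) * z.2‖ = r * ‖z.2‖ := by
      simp only [norm_mul, Complex.norm_real]
      rw [Real.norm_of_nonneg hr.le]
    show ‖_‖^2 + ‖_‖^2 < 1
    rw [h2]
    have hsq := pow_le_pow_left₀ (norm_nonneg _) hb1 2
    calc ‖(r:ℂ) * z.1 + ((c : ℝ) : ℂ) * (((r - r^2 : ℝ)) : ℂ) * z.2 ^ 2‖^2 + (r * ‖z.2‖)^2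
        ≤ (r * ‖z.1‖ + c * (r - r^2) * ‖z.2‖^2)^2 + (r * ‖z.2‖)^2 := by linarith
      _ < 1 := by rw [hc] at *; exact hkey
  · -- equation
    have hrt : Real.exp t * r = Real.exp s := by
      rw [hrdef, ← Real.exp_add]; ring_nf
    have hcast : ((Real.exp t : ℝ) : ℂ) * ((r : ℝ) : ℂ) = ((Real.exp s : ℝ) : ℂ) := by
      rw [← Complex.ofReal_mul, hrt]
    show (Real.exp t • Phi _) = Real.exp s • Phi z
    simp only [Phi, Prod.smul_mk, Complex.real_smul, Prod.mk.injEq, Complex.ofReal_sub,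
      Complex.ofReal_pow]
    constructor
    · linear_combination (z.1 + ((c : ℝ) : ℂ) * z.2^2) * hcast
    · linear_combination z.2 * hcast
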